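/- Let F: R^d → R be differentiable and L-smooth (i.e., ||∇F(x) - ∇F(y)||_2 ≤ L||x-y||_2 for all x,y). Let H be a symmetric positive definite matrix with H ⪰ ρI for some ρ > 0, and suppose x_{t+1} satisfies H(x_t - x_{t+1}) = η m for some vector m and step size η with 0 < η ≤ ρ/(2L). Then F(x_{t+1}) ≤ F(x_t) - (ρ/(2η))||x_t - x_{t+1}||_2² + (η/ρ)||∇F(x_t) - m||_2². -/

import Mathlib

/-!
With `v = x - x'`, the descent inequality gives `F x' ≤ F x - ⟪∇F x, v⟫ + (L/2)‖v‖²`. Split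
`⟪∇F x, v⟫ = ⟪∇F x - m, v⟫ + ⟪m, v⟫`: the update rule and `H ⪰ ρI` give
`η ⟪m, v⟫ = ⟪H v, v⟫ ≥ ρ‖v‖²`, Young's inequality bounds the cross term by
`(η/ρ)‖∇F x - m‖² + (ρ/4η)‖v‖²`, and `η ≤ ρ/(2L)` gives `L/2 ≤ ρ/(4η)`.
-/

open RealInnerProductSpace

variable {E : Type*} [NormedAddCommGroup E] [InnerProductSpace ℝ E]

theorem two_mul_real_inner_le_add_mul_norm_sq (u v : E) {ε : ℝ} (hε : 0 < ε) :
    2 * ⟪u, v⟫ ≤ ε * ‖u‖ ^ 2 + ε⁻¹ * ‖v‖ ^ 2 :=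
  calc 2 * ⟪u, v⟫ ≤ 2 * ‖u‖ * ‖v‖ := by linarith [real_inner_le_norm u v]
    _ ≤ ε * ‖u‖ ^ 2 + ε⁻¹ * ‖v‖ ^ 2 := two_mul_le_add_mul_sq hε

variable [CompleteSpace E]

theorem HasGradientAt.hasDerivAt_comp_add_smul {F : E → ℝ} {g x v : E} {t : ℝ}
    (hF : HasGradientAt F g (x + t • v)) :
    HasDerivAt (fun s : ℝ ↦ F (x + s • v)) ⟪g, v⟫ t := by
  have hline : HasDerivAt (fun s : ℝ ↦ x + s • v) v t := by
    simpa using ((hasDerivAt_id t).smul_const v).const_add x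
  simpa [Function.comp_def] using hF.hasFDerivAt.comp_hasDerivAt t hline

theorem le_add_inner_gradient_add_of_lipschitz_gradient {F : E → ℝ} {L : ℝ}
    (hF : Differentiable ℝ F) (hL : ∀ x y, ‖gradient F x - gradient F y‖ ≤ L * ‖x - y‖)
    (x y : E) :
    F y ≤ F x + ⟪gradient F x, y - x⟫ + L / 2 * ‖y - x‖ ^ 2 := by
  set v := y - x
  let φ : ℝ → ℝ := fun t ↦ F (x + t • v) - t * ⟪gradient F x, v⟫ - L / 2 * t ^ 2 * ‖v‖ ^ 2
  have hφ (t : ℝ) : HasDerivAt φ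
      (⟪gradient F (x + t • v) - gradient F x, v⟫ - L * t * ‖v‖ ^ 2) t := by
    refine (((hF _).hasGradientAt.hasDerivAt_comp_add_smul.sub
      ((hasDerivAt_id t).mul_const ⟪gradient F x, v⟫)).sub
      (((hasDerivAt_pow 2 t).const_mul (L / 2)).mul_const (‖v‖ ^ 2))).congr_deriv ?_
    simp only [inner_sub_left]
    ring
  have hφ_nonpos (t : ℝ) (ht : 0 ≤ t) :
      ⟪gradient F (x + t • v) - gradient F x, v⟫ - L * t * ‖v‖ ^ 2 ≤ 0 := by
    have := calc ⟪gradient F (x + t • v) - gradient F x, v⟫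
        ≤ ‖gradient F (x + t • v) - gradient F x‖ * ‖v‖ := real_inner_le_norm _ _
      _ ≤ L * ‖t • v‖ * ‖v‖ := by
          gcongr
          simpa using hL (x + t • v) x
      _ = L * t * ‖v‖ ^ 2 := by rw [norm_smul, Real.norm_of_nonneg ht]; ring
    linarith
  have hanti : AntitoneOn φ (Set.Ici 0) :=
    antitoneOn_of_hasDerivWithinAt_nonpos (convex_Ici 0)
      (fun t _ ↦ (hφ t).continuousAt.continuousWithinAt)
      (fun t _ ↦ (hφ t).hasDerivWithinAt)
      (fun t ht ↦ hφ_nonpos t (interior_subset ht))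
  have hφ01 := hanti Set.self_mem_Ici (zero_le_one' ℝ) zero_le_one
  simp only [φ, zero_smul, add_zero, one_smul, v, add_sub_cancel] at hφ01
  linarith

theorem mars_descent_lemma_general (d : ℕ)
    (F : EuclideanSpace ℝ (Fin d) → ℝ) (L ρ η : ℝ)
    (hF : Differentiable ℝ F)
    (hL : ∀ x y, ‖gradient F x - gradient F y‖ ≤ L * ‖x - y‖)
    (H : EuclideanSpace ℝ (Fin d) →ₗ[ℝ] EuclideanSpace ℝ (Fin d))
    (hρ : 0 < ρ) (hH : ∀ v, ρ * ‖v‖ ^ 2 ≤ ⟪H v, v⟫)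
    (x x' m : EuclideanSpace ℝ (Fin d))
    (hη : 0 < η) (hηL : η ≤ ρ / (2 * L))
    (hupd : H (x - x') = η • m) :
    F x' ≤ F x - (ρ / (2 * η)) * ‖x - x'‖ ^ 2 + (η / ρ) * ‖gradient F x - m‖ ^ 2 := by
  set v := x - x'
  set g := gradient F x
  have hdescent : F x' ≤ F x - ⟪g, v⟫ + L / 2 * ‖v‖ ^ 2 := by
    have := le_add_inner_gradient_add_of_lipschitz_gradient hF hL x x'
    rwa [← neg_sub, inner_neg_right, norm_neg, ← sub_eq_add_neg] at this
  have hprecond : ρ / η * ‖v‖ ^ 2 ≤ ⟪m, v⟫ := by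
    have : ρ * ‖v‖ ^ 2 ≤ η * ⟪m, v⟫ := by
      simpa only [hupd, real_inner_smul_left] using hH v
    rw [div_mul_eq_mul_div, div_le_iff₀ hη]
    linarith
  have hyoung := two_mul_real_inner_le_add_mul_norm_sq (m - g) v (ε := 2 * η / ρ) (by positivity)
  rw [norm_sub_rev, inner_sub_left, inv_div] at hyoung
  have hstep : 2 * η * L ≤ ρ := by
    rcases le_or_gt L 0 with hL0 | hL0
    · nlinarith
    · rw [le_div_iff₀ (by positivity)] at hηL
      linarith
  have hsmooth : L / 2 * ‖v‖ ^ 2 ≤ ρ / (4 * η) * ‖v‖ ^ 2 := by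
    gcongr ?_ * _
    rw [le_div_iff₀ (by positivity)]
    linarith
  linear_combination hdescent + hyoung / 2 + hprecond + hsmooth

/-- Descent lemma for preconditioned updates (MARS): if F is L-smooth,
    H is a symmetric linear map with H ⪰ ρI (ρ > 0), the update satisfies
    H(x_t - x_{t+1}) = η m with 0 < η ≤ ρ/(2L), then
    F(x_{t+1}) ≤ F(x_t) - (ρ/(2η))‖x_t - x_{t+1}‖² + (η/ρ)‖∇F(x_t) - m‖². -/
theorem mars_descent_lemma (d : ℕ)
    (F : EuclideanSpace ℝ (Fin d) → ℝ) (L ρ η : ℝ)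
    (hF : Differentiable ℝ F)
    (hL : ∀ x y, ‖gradient F x - gradient F y‖ ≤ L * ‖x - y‖)
    (H : EuclideanSpace ℝ (Fin d) →ₗ[ℝ] EuclideanSpace ℝ (Fin d))
    (hsymm : ∀ x y, ⟪H x, y⟫ = ⟪x, H y⟫)
    (hρ : 0 < ρ) (hH : ∀ v, ρ * ‖v‖ ^ 2 ≤ ⟪H v, v⟫)
    (x x' m : EuclideanSpace ℝ (Fin d))
    (hη : 0 < η) (hηL : η ≤ ρ / (2 * L))
    (hupd : H (x - x') = η • m) :
    F x' ≤ F x - (ρ / (2 * η)) * ‖x - x'‖ ^ 2 + (η / ρ) * ‖gradient F x - m‖ ^ 2 :=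
  mars_descent_lemma_general d F L ρ η hF hL H hρ hH x x' m hη hηL hupd
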